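/- Let μ be a probability measure on [0,∞) with μ({0}) < 1, and let ν be the uniform probability measure on [0,2π). Then the integral of D(t₁,t₂,θ₁,θ₂) with respect to the product measure μ ⊗ μ ⊗ ν ⊗ ν is infinite: ∫ D d(μ⊗μ⊗ν⊗ν) = ∞. In other words, the distance from the origin to the intersection point of two independent random lines drawn from any nontrivial rotationally invariant distribution has infinite expectation. -/

import Mathlib

open MeasureTheory Real

/-- Distance from the origin to the intersection point of the lines
`{(x,y) : x cos θᵢ + y sin θᵢ = tᵢ}`, `i = 1, 2`. -/
noncomputable def interDist (t₁ t₂ θ₁ θ₂ : ℝ) : ℝ :=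
  Real.sqrt (t₁ ^ 2 + t₂ ^ 2 - 2 * t₁ * t₂ * Real.cos (θ₂ - θ₁)) / |Real.sin (θ₂ - θ₁)|

/-- Uniform probability measure on `[0, 2π)`. -/
noncomputable def unifCircle : Measure ℝ :=
  (ENNReal.ofReal (2 * π))⁻¹ • volume.restrict (Set.Ico 0 (2 * π))

lemma twoPi_ofReal_ne_zero : ENNReal.ofReal (2 * π) ≠ 0 := by
  simp only [ne_eq, ENNReal.ofReal_eq_zero, not_le]
  positivity

instance : IsProbabilityMeasure unifCircle := by
  constructor
  rw [unifCircle, Measure.smul_apply, Measure.restrict_apply MeasurableSet.univ,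
    Set.univ_inter, Real.volume_Ico, smul_eq_mul, sub_zero]
  exact ENNReal.inv_mul_cancel twoPi_ofReal_ne_zero ENNReal.ofReal_ne_top

lemma lint_base {c r : ℝ} (hc : 0 < c) (hr : 0 < r) :
    ∫⁻ x in Set.Ioo (0:ℝ) r, ENNReal.ofReal (c / x) = ⊤ := by
  by_contra h
  have hmeas : AEStronglyMeasurable (fun x : ℝ => c / x) (volume.restrict (Set.Ioo 0 r)) :=
    (measurable_const.div measurable_id).aestronglyMeasurable
  have hpos : 0 ≤ᵐ[volume.restrict (Set.Ioo 0 r)] fun x : ℝ => c / x := by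
    filter_upwards [ae_restrict_mem measurableSet_Ioo] with x hx
    exact div_nonneg hc.le hx.1.le
  have hint : IntegrableOn (fun x : ℝ => c / x) (Set.Ioo 0 r) :=
    ⟨hmeas, (hasFiniteIntegral_iff_ofReal hpos).2 (lt_top_iff_ne_top.2 h)⟩
  have h2 : IntegrableOn (fun x : ℝ => x ^ (-1:ℝ)) (Set.Ioo 0 r) := by
    refine IntegrableOn.congr_fun (hint.const_mul c⁻¹) (fun x hx => ?_) measurableSet_Ioo
    rw [Real.rpow_neg_one]
    field_simp
  rw [intervalIntegral.integrableOn_Ioo_rpow_iff hr] at h2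
  linarith

lemma lint_base' {c : ℝ} (hc : 0 < c) {b r : ℝ} (hr : 0 < r) :
    ∫⁻ x in Set.Ioo b (b + r), ENNReal.ofReal (c / (x - b)) = ⊤ := by
  have hmap : Measure.map (· + b) (volume : Measure ℝ) = volume :=
    map_add_right_eq_self volume b
  have key : ∫⁻ y in Set.Ioo b (b+r), ENNReal.ofReal (c / (y - b))
        ∂(Measure.map (· + b) volume)
      = ∫⁻ x in (· + b) ⁻¹' (Set.Ioo b (b+r)), ENNReal.ofReal (c / (x + b - b)) :=
    setLIntegral_map measurableSet_Ioo (by fun_prop) (measurable_add_const b)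
  rw [hmap] at key
  rw [key]
  have hpre : (· + b) ⁻¹' (Set.Ioo b (b+r)) = Set.Ioo 0 r := by
    ext x; simp only [Set.mem_preimage, Set.mem_Ioo]
    constructor <;> rintro ⟨h1, h2⟩ <;> exact ⟨by linarith, by linarith⟩
  rw [hpre]
  simp only [add_sub_cancel_right]
  exact lint_base hc hr

lemma inner_top {ε : ℝ} (hε : 0 < ε) {θ₁ : ℝ} (hθ : θ₁ ∈ Set.Ico 0 (2*π)) :
    ∫⁻ θ₂, (if Real.cos (θ₂ - θ₁) ≤ 0 then ENNReal.ofReal (ε / |Real.sin (θ₂ - θ₁)|) else 0)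
      ∂unifCircle = ⊤ := by
  have hpi := Real.pi_pos
  obtain ⟨θs, hs, hsl, hsu⟩ : ∃ θs, (θs - θ₁ = π ∨ θs - θ₁ = -π) ∧ 0 ≤ θs ∧ θs < 2*π := by
    rcases lt_or_ge θ₁ π with h | h
    · exact ⟨θ₁ + π, Or.inl (by ring), by linarith [hθ.1], by linarith⟩
    · exact ⟨θ₁ - π, Or.inr (by ring), by linarith, by linarith [hθ.2]⟩
  set δ := min (π/2) (2*π - θs) with hδdef
  have hδ : 0 < δ := lt_min (by linarith) (by linarith)
  have hδ2 : δ ≤ π/2 := min_le_left _ _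
  have hδ3 : δ ≤ 2*π - θs := min_le_right _ _
  have hJ : Set.Ioo θs (θs+δ) ⊆ Set.Ico 0 (2*π) := fun x hx =>
    ⟨by linarith [hx.1], by linarith [hx.2]⟩
  have hGmeas : Measurable (fun θ₂ : ℝ =>
      (if Real.cos (θ₂ - θ₁) ≤ 0 then ENNReal.ofReal (ε / |Real.sin (θ₂ - θ₁)|) else 0)) := by
    refine Measurable.ite (measurableSet_le (by fun_prop) measurable_const) (by fun_prop)
      measurable_const
  rw [unifCircle, lintegral_smul_measure]
  have hrestr : (∫⁻ θ₂ in Set.Ico 0 (2*π),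
      (if Real.cos (θ₂ - θ₁) ≤ 0 then ENNReal.ofReal (ε / |Real.sin (θ₂ - θ₁)|) else 0)) = ⊤ := by
    refine top_le_iff.mp ?_
    calc (⊤ : ENNReal) = (∫⁻ θ₂ in Set.Ioo θs (θs+δ), ENNReal.ofReal (ε / (θ₂ - θs))) :=
          (lint_base' hε hδ).symm
      _ ≤ (∫⁻ θ₂ in Set.Ioo θs (θs+δ),
          (if Real.cos (θ₂ - θ₁) ≤ 0 then ENNReal.ofReal (ε / |Real.sin (θ₂ - θ₁)|) else 0)) := by
          refine setLIntegral_mono hGmeas fun θ₂ hθ₂ => ?_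
          obtain ⟨h1, h2⟩ := hθ₂
          set u := θ₂ - θs with hu
          have hu1 : 0 < u := by simp [hu]; linarith
          have hu2 : u < δ := by simp [hu]; linarith
          have hsin : Real.sin (θ₂ - θ₁) = - Real.sin u := by
            rcases hs with h | h
            · rw [show θ₂ - θ₁ = u + π by rw [hu]; linarith, Real.sin_add_pi]
            · rw [show θ₂ - θ₁ = u - π by rw [hu]; linarith, Real.sin_sub_pi]
          have hcos : Real.cos (θ₂ - θ₁) = - Real.cos u := by
            rcases hs with h | h
            · rw [show θ₂ - θ₁ = u + π by rw [hu]; linarith, Real.cos_add_pi]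
            · rw [show θ₂ - θ₁ = u - π by rw [hu]; linarith, Real.cos_sub_pi]
          have hcosu : 0 ≤ Real.cos u :=
            Real.cos_nonneg_of_mem_Icc ⟨by linarith, by linarith⟩
          have hsinu : 0 < Real.sin u :=
            Real.sin_pos_of_pos_of_lt_pi hu1 (by linarith)
          rw [if_pos (by rw [hcos]; linarith)]
          apply ENNReal.ofReal_le_ofReal
          rw [hsin, abs_neg, abs_of_pos hsinu]
          have hle : Real.sin u ≤ u := (Real.sin_lt hu1).le
          gcongr
      _ ≤ (∫⁻ θ₂ in Set.Ico 0 (2*π),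
          (if Real.cos (θ₂ - θ₁) ≤ 0 then ENNReal.ofReal (ε / |Real.sin (θ₂ - θ₁)|) else 0)) :=
          lintegral_mono_set hJ
  rw [hrestr, smul_eq_mul, ENNReal.mul_top]
  simp only [ne_eq, ENNReal.inv_eq_zero]
  exact ENNReal.ofReal_ne_top

theorem intersection_distance_infinite_expectation (μ : Measure ℝ)
    [IsProbabilityMeasure μ] (hsupp : μ (Set.Iio 0) = 0) (h0 : μ {0} < 1) :
    ∫⁻ q : ℝ × ℝ × ℝ × ℝ, ENNReal.ofReal (interDist q.1 q.2.1 q.2.2.1 q.2.2.2)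
      ∂(μ.prod (μ.prod (unifCircle.prod unifCircle))) = ⊤ := by
  have hpi := Real.pi_pos
  -- μ gives full mass to [0, ∞)
  have hIci0 : μ (Set.Ici 0) = 1 := by
    have := measure_add_measure_compl (μ := μ) (measurableSet_Iio (a := (0:ℝ)))
    rw [hsupp, zero_add, Set.compl_Iio, measure_univ] at this
    exact this
  -- choose ε > 0 with μ [ε, ∞) ≠ 0
  obtain ⟨ε, hε, hμε⟩ : ∃ ε : ℝ, 0 < ε ∧ μ (Set.Ici ε) ≠ 0 := by
    by_contra hcon
    push_neg at hcon
    have hunion : Set.Ioi (0:ℝ) ⊆ ⋃ n : ℕ, Set.Ici (((n:ℝ)+1)⁻¹) := by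
      intro x hx
      obtain ⟨n, hn⟩ := exists_nat_gt x⁻¹
      refine Set.mem_iUnion.2 ⟨n, ?_⟩
      have hx0 : 0 < x := hx
      have hn1 : (0:ℝ) < (n:ℝ)+1 := by positivity
      have hlt : x⁻¹ < (n:ℝ)+1 := by linarith
      have key : 1 < x * ((n:ℝ)+1) := by
        have := mul_lt_mul_of_pos_left hlt hx0
        rwa [mul_inv_cancel₀ hx0.ne'] at this
      rw [Set.mem_Ici]
      rw [inv_le_comm₀ hn1 hx0]
      nlinarith
    have h1 : μ (Set.Ioi 0) = 0 :=
      measure_mono_null hunion (measure_iUnion_null fun n => hcon _ (by positivity))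
    have h2 : μ (Set.Ici 0) ≤ μ {0} + μ (Set.Ioi 0) := by
      refine le_trans (measure_mono ?_) (measure_union_le _ _)
      intro x hx
      rcases eq_or_lt_of_le (Set.mem_Ici.mp hx) with h | h
      · exact Or.inl (by simp [← h])
      · exact Or.inr h
    rw [hIci0, h1, add_zero] at h2
    exact absurd h2 (not_le.2 h0)
  -- the minorant
  set G : ℝ × ℝ → ENNReal := fun p =>
    if Real.cos (p.2 - p.1) ≤ 0 then ENNReal.ofReal (ε / |Real.sin (p.2 - p.1)|) else 0
    with hGdef
  have hGm : Measurable G :=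
    Measurable.ite (measurableSet_le (by fun_prop) measurable_const) (by fun_prop)
      measurable_const
  set f : ℝ → ENNReal := Set.indicator (Set.Ici ε) 1 with hfdef
  set f₀ : ℝ → ENNReal := Set.indicator (Set.Ici 0) 1 with hf₀def
  have hfm : Measurable f := measurable_one.indicator measurableSet_Ici
  have hf₀m : Measurable f₀ := measurable_one.indicator measurableSet_Ici
  set g : ℝ × (ℝ × ℝ) → ENNReal := fun p => f₀ p.1 * G p.2 with hgdef
  have hgm : Measurable g := (hf₀m.comp measurable_fst).mul (hGm.comp measurable_snd)
  -- pointwise bound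
  have hFle : ∀ q : ℝ × ℝ × ℝ × ℝ,
      f q.1 * g q.2 ≤ ENNReal.ofReal (interDist q.1 q.2.1 q.2.2.1 q.2.2.2) := by
    rintro ⟨t₁, t₂, θ₁, θ₂⟩
    simp only [hfdef, hgdef, hf₀def, hGdef]
    by_cases h1 : t₁ ∈ Set.Ici ε
    swap
    · simp [Set.indicator_of_notMem h1]
    by_cases h2 : t₂ ∈ Set.Ici (0:ℝ)
    swap
    · simp [Set.indicator_of_notMem h2]
    rw [Set.indicator_of_mem h1, Set.indicator_of_mem h2]
    simp only [Pi.one_apply, one_mul]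
    by_cases h3 : Real.cos (θ₂ - θ₁) ≤ 0
    swap
    · simp [h3]
    rw [if_pos h3]
    apply ENNReal.ofReal_le_ofReal
    rw [interDist]
    rcases eq_or_lt_of_le (abs_nonneg (Real.sin (θ₂ - θ₁))) with h4 | h4
    · rw [← h4]
      simp
    · have ht₁ : ε ≤ t₁ := h1
      have ht₂ : (0:ℝ) ≤ t₂ := h2
      have hsq : ε ≤ Real.sqrt (t₁ ^ 2 + t₂ ^ 2 - 2 * t₁ * t₂ * Real.cos (θ₂ - θ₁)) := by
        have key : ε^2 ≤ t₁ ^ 2 + t₂ ^ 2 - 2 * t₁ * t₂ * Real.cos (θ₂ - θ₁) := by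
          nlinarith [mul_nonneg (mul_nonneg (le_trans hε.le ht₁) ht₂) (neg_nonneg.2 h3)]
        calc ε = Real.sqrt (ε^2) := (Real.sqrt_sq hε.le).symm
          _ ≤ _ := Real.sqrt_le_sqrt key
      gcongr
  -- compute the integral of the minorant
  have hprod : (∫⁻ q : ℝ × ℝ × ℝ × ℝ, f q.1 * g q.2
      ∂(μ.prod (μ.prod (unifCircle.prod unifCircle)))) = ⊤ := by
    rw [lintegral_prod_mul hfm.aemeasurable hgm.aemeasurable]
    rw [hgdef]
    rw [lintegral_prod_mul hf₀m.aemeasurable hGm.aemeasurable]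
    have hf : (∫⁻ t, f t ∂μ) = μ (Set.Ici ε) := lintegral_indicator_one measurableSet_Ici
    have hf₀ : (∫⁻ t, f₀ t ∂μ) = μ (Set.Ici 0) := lintegral_indicator_one measurableSet_Ici
    have hG : (∫⁻ p, G p ∂(unifCircle.prod unifCircle)) = ⊤ := by
      rw [lintegral_prod _ hGm.aemeasurable]
      have hae : ∀ᵐ θ₁ ∂unifCircle, θ₁ ∈ Set.Ico 0 (2*π) := by
        rw [unifCircle]
        exact Measure.ae_smul_measure (ae_restrict_mem measurableSet_Ico) _
      have htop : ∀ᵐ θ₁ ∂unifCircle, (∫⁻ θ₂, G (θ₁, θ₂) ∂unifCircle) = ⊤ :=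
        hae.mono fun θ₁ h => inner_top hε h
      rw [lintegral_congr_ae htop]
      simp [lintegral_const, measure_univ]
    rw [hf, hf₀, hIci0, hG, one_mul, ENNReal.mul_top hμε]
  refine top_le_iff.mp ?_
  calc (⊤ : ENNReal) = (∫⁻ q : ℝ × ℝ × ℝ × ℝ, f q.1 * g q.2
        ∂(μ.prod (μ.prod (unifCircle.prod unifCircle)))) := hprod.symm
    _ ≤ _ := lintegral_mono hFle
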